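/- Let n = 2m be an even positive integer, let C ⊆ ℝ² be a strict closed convex cone with nonempty interior, and let g ∈ GL(2,ℤ) preserve C. Let P : ℝ² → ℝ be a homogeneous polynomial function of degree n such that P(g·v) = P(v) for all v ∈ ℝ², and such that P(v₀) ≠ 0 for some v₀ in the interior of C. Assume moreover that there exist no real number c and no homogeneous polynomial function q : ℝ² → ℝ of degree 2 such that P(v) = c·(q(v))^m for all v ∈ ℝ². Then g² is the identity matrix. -/

import Mathlib

/-!
Replace `g` by `g²`, which has determinant `1` and still fixes `P`. If `tr g² > 2`, then in an
eigenbasis `g²` acts as `(x, y) ↦ (a x, y / a)` with `a > 1`; if `tr g² = 2` and `g² ≠ 1`, it acts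
as the shear `(x, y) ↦ (x + y, y)`. Dehomogenizing, `p(x) = P(x, 1)` satisfies
`p(a² x) = a^(2m) p(x)`, resp. `p(x + 1) = p(x)`, so `p = c xᵐ`, resp. `p = c`, and `P` is
`c (xy)ᵐ`, resp. `c (y²)ᵐ`: both excluded. Otherwise `tr g² = (tr g)² - 2 det g < 2` forces
`det g = 1` and `|tr g| ≤ 1`, and Cayley–Hamilton gives `v + g²v = 0`, `v + g³v = 0` or
`v + gv + g²v = 0`, which in a strict convex cone forces `v = 0`; but a cone with interior
points is not `{0}`.
-/

open MvPolynomial Matrix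

namespace Polynomial

variable {R : Type*} [CommRing R] [IsDomain R]

theorem eq_C_of_eval_add_one_eq [CharZero R] {p : R[X]} (h : ∀ x, p.eval (x + 1) = p.eval x) :
    p = C (p.eval 0) := by
  have hnat : ∀ k : ℕ, p.eval (k : R) = p.eval 0 := by
    intro k
    induction k with
    | zero => simp
    | succ k ih => rw [Nat.cast_succ, h, ih]
  refine eq_of_infinite_eval_eq _ _ ((Set.infinite_range_of_injective Nat.cast_injective).mono ?_)
  rintro _ ⟨k, rfl⟩
  simp [hnat]

theorem eq_C_mul_X_pow_of_eval_mul_eq [Infinite R] {p : R[X]} {r : R} {n : ℕ}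
    (hr : Function.Injective (r ^ · : ℕ → R)) (h : ∀ x, p.eval (r * x) = r ^ n * p.eval x) :
    p = C (p.coeff n) * X ^ n := by
  have hcomp : p.comp (C r * X) = C (r ^ n) * p := Polynomial.funext fun x => by simp [h]
  ext k
  rw [coeff_C_mul_X_pow]
  split_ifs with hk
  · rw [hk]
  · by_contra hpk
    have hcoeff := congr_arg (coeff · k) hcomp
    simp only [comp_C_mul_X_coeff, coeff_C_mul] at hcoeff
    exact hk (hr (mul_right_cancel₀ hpk (by simpa only [mul_comm] using hcoeff)))

end Polynomial

namespace MvPolynomial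

section CommSemiring

variable {σ R : Type*} [CommSemiring R]

theorem IsHomogeneous.eval_smul {φ : MvPolynomial σ R} {n : ℕ} (hφ : φ.IsHomogeneous n)
    (r : R) (v : σ → R) : eval (r • v) φ = r ^ n * eval v φ := by
  simp only [eval_eq, Finset.mul_sum]
  refine Finset.sum_congr rfl fun d hd => ?_
  simp only [Pi.smul_apply, smul_eq_mul, mul_pow, Finset.prod_mul_distrib,
    Finset.prod_pow_eq_pow_sum, ← hφ.degree_eq_sum_deg_support hd]
  ring

def IsScaledQuadraticPower (P : MvPolynomial σ R) (m : ℕ) : Prop :=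
  ∃ (c : R) (q : MvPolynomial σ R), q.IsHomogeneous 2 ∧ ∀ v, eval v P = c * eval v q ^ m

theorem isScaledQuadraticPower_C_mul_pow {q : MvPolynomial σ R} (hq : q.IsHomogeneous 2)
    (c : R) (m : ℕ) : IsScaledQuadraticPower (C c * q ^ m) m :=
  ⟨c, q, hq, fun v => by simp⟩

variable [Fintype σ]

noncomputable def linearSubst (M : Matrix σ σ R) : MvPolynomial σ R →ₐ[R] MvPolynomial σ R :=
  aeval fun i => ∑ j, C (M i j) * X j

theorem eval_linearSubst (M : Matrix σ σ R) (p : MvPolynomial σ R) (v : σ → R) :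
    eval v (linearSubst M p) = eval (M *ᵥ v) p := by
  rw [linearSubst, ← aeval_eq_eval, comp_aeval_apply]
  simp only [map_sum, aeval_eq_eval, map_mul, eval_C, eval_X]
  rfl

theorem IsHomogeneous.linearSubst {p : MvPolynomial σ R} {n : ℕ} (hp : p.IsHomogeneous n)
    (M : Matrix σ σ R) : (linearSubst M p).IsHomogeneous n := by
  have h := hp.aeval (fun i => ∑ j, C (M i j) * X j) fun i =>
    IsHomogeneous.sum _ _ _ fun j _ => isHomogeneous_C_mul_X (M i j) j
  rwa [one_mul] at h

end CommSemiring

theorem IsScaledQuadraticPower.of_linearSubst {σ R : Type*} [CommRing R] [Fintype σ]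
    [DecidableEq σ] {P : MvPolynomial σ R} {m : ℕ} {M : Matrix σ σ R} (hM : IsUnit M.det)
    (h : IsScaledQuadraticPower (linearSubst M P) m) : IsScaledQuadraticPower P m := by
  obtain ⟨c, q, hq, hPq⟩ := h
  refine ⟨c, linearSubst M⁻¹ q, hq.linearSubst _, fun v => ?_⟩
  rw [eval_linearSubst, ← hPq, eval_linearSubst, mulVec_mulVec, mul_nonsing_inv _ hM, one_mulVec]

section BinaryForm

variable {K : Type*} [Field K]

noncomputable def dehomogenize (Q : MvPolynomial (Fin 2) K) : Polynomial K :=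
  aeval ![Polynomial.X, 1] Q

theorem eval_dehomogenize (Q : MvPolynomial (Fin 2) K) (x : K) :
    (dehomogenize Q).eval x = eval ![x, 1] Q := by
  rw [dehomogenize, ← Polynomial.coe_aeval_eq_eval, comp_aeval_apply, ← aeval_eq_eval]
  congr 2
  funext i
  fin_cases i <;> simp

theorem IsHomogeneous.eq_of_dehomogenize_eq [Infinite K] {Q Q' : MvPolynomial (Fin 2) K} {n : ℕ}
    (hQ : Q.IsHomogeneous n) (hQ' : Q'.IsHomogeneous n) (h : dehomogenize Q = dehomogenize Q') :
    Q = Q' := by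
  -- The factor `X 1` makes the identity hold on the line `y = 0`, where homogeneity says nothing.
  have hX : (Q - Q') * X 1 = 0 := by
    refine MvPolynomial.funext fun v => ?_
    by_cases hv : v 1 = 0
    · simp [hv]
    have hv' : v = v 1 • ![v 0 / v 1, 1] := by
      ext i; fin_cases i <;> simp [mul_div_cancel₀ _ hv]
    rw [hv', map_mul, map_sub, hQ.eval_smul, hQ'.eval_smul, ← eval_dehomogenize,
      ← eval_dehomogenize, h]
    simp
  rw [mul_eq_zero, sub_eq_zero] at hX
  exact hX.resolve_right (X_ne_zero _)

theorem eq_C_mul_X_mul_X_pow_of_diagonal_invariant [Infinite K] {Q : MvPolynomial (Fin 2) K}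
    {m : ℕ} (hQ : Q.IsHomogeneous (2 * m)) {a b : K} (ha : Function.Injective (a ^ · : ℕ → K))
    (hab : a * b = 1) (hinv : ∀ x y, eval ![a * x, b * y] Q = eval ![x, y] Q) :
    ∃ c, Q = C c * (X 0 * X 1) ^ m := by
  have hp : ∀ x, (dehomogenize Q).eval (a ^ 2 * x) = (a ^ 2) ^ m * (dehomogenize Q).eval x := by
    intro x
    have hpt : ![a ^ 2 * x, 1] = ![a * (a * x), b * a] := by rw [mul_comm b, hab, sq, mul_assoc]
    have hsmul : ![a * x, a] = a • ![x, 1] := by ext i; fin_cases i <;> simp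
    rw [eval_dehomogenize, eval_dehomogenize, hpt, hinv, hsmul, hQ.eval_smul, pow_mul]
  have ha2 : Function.Injective ((a ^ 2) ^ · : ℕ → K) := fun i j hij => by
    have := @ha (2 * i) (2 * j) (by simpa only [← pow_mul] using hij)
    omega
  refine ⟨(dehomogenize Q).coeff m, hQ.eq_of_dehomogenize_eq ?_ ?_⟩
  · simpa [two_mul] using (((isHomogeneous_X K 0).mul (isHomogeneous_X K 1)).pow m).C_mul _
  · conv_lhs => rw [Polynomial.eq_C_mul_X_pow_of_eval_mul_eq ha2 hp]
    simp [dehomogenize]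

theorem eq_C_mul_X_sq_pow_of_shear_invariant [CharZero K] {Q : MvPolynomial (Fin 2) K} {m : ℕ}
    (hQ : Q.IsHomogeneous (2 * m)) (hinv : ∀ x y, eval ![x + y, y] Q = eval ![x, y] Q) :
    ∃ c, Q = C c * (X 1 ^ 2) ^ m := by
  have hp : ∀ x, (dehomogenize Q).eval (x + 1) = (dehomogenize Q).eval x := fun x => by
    rw [eval_dehomogenize, eval_dehomogenize, hinv]
  refine ⟨(dehomogenize Q).eval 0, hQ.eq_of_dehomogenize_eq ?_ ?_⟩
  · simpa using (((isHomogeneous_X K 1).pow 2).pow m).C_mul _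
  · conv_lhs => rw [Polynomial.eq_C_of_eval_add_one_eq hp]
    simp [dehomogenize]

end BinaryForm

end MvPolynomial

namespace Matrix

section CommRing

variable {R : Type*} [CommRing R]

theorem mul_self_eq_trace_smul_sub_det_smul (A : Matrix (Fin 2) (Fin 2) R) :
    A * A = A.trace • A - A.det • 1 := by
  ext i j
  fin_cases i <;> fin_cases j <;> simp [mul_apply, trace_fin_two, det_fin_two] <;> ring

theorem trace_mul_self (A : Matrix (Fin 2) (Fin 2) R) :
    (A * A).trace = A.trace ^ 2 - 2 * A.det := by
  rw [mul_self_eq_trace_smul_sub_det_smul, trace_sub, trace_smul, trace_smul, trace_one]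
  simp only [smul_eq_mul, Fintype.card_fin, Nat.cast_ofNat]
  ring

theorem sub_smul_one_mul_sub_smul_one {A : Matrix (Fin 2) (Fin 2) R} {a b : R}
    (hsum : a + b = A.trace) (hprod : a * b = A.det) : (A - a • 1) * (A - b • 1) = 0 := by
  have h := mul_self_eq_trace_smul_sub_det_smul A
  rw [← hsum, ← hprod] at h
  simp only [sub_mul, mul_sub, h, Matrix.mul_smul, Matrix.smul_mul, mul_one, one_mul, smul_smul]
  module

theorem exists_mulVec_ne_zero {n : Type*} [Fintype n] {N : Matrix n n R} (hN : N ≠ 0) :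
    ∃ w, N *ᵥ w ≠ 0 := by
  by_contra! h
  exact hN (ext_iff_mulVec.mpr fun v => by simp [h])

theorem transpose_of_pair_mulVec (u w z : Fin 2 → R) : (of ![u, w])ᵀ *ᵥ z = z 0 • u + z 1 • w := by
  rw [mulVec_transpose, vecMul_eq_sum, Fin.sum_univ_two]
  rfl

end CommRing

section Field

variable {K : Type*} [Field K]

theorem linearIndependent_pair_of_mulVec {n : Type*} [Fintype n] {N : Matrix n n K}
    {u w : n → K} (hu : u ≠ 0) (hNu : N *ᵥ u = 0) (hNw : N *ᵥ w ≠ 0) :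
    LinearIndependent K ![u, w] := by
  rw [LinearIndependent.pair_iff]
  intro s t hst
  have ht : t = 0 := by
    have h := congr_arg (N *ᵥ ·) hst
    simpa [mulVec_add, mulVec_smul, hNu, hNw] using h
  subst ht
  simpa [hu] using hst

theorem isUnit_det_transpose_of_pair {u w : Fin 2 → K} (h : LinearIndependent K ![u, w]) :
    IsUnit (of ![u, w])ᵀ.det := by
  rw [← isUnit_iff_isUnit_det, isUnit_transpose]
  exact linearIndependent_rows_iff_isUnit.mp h

theorem exists_ne_zero_mulVec_eq_smul {A : Matrix (Fin 2) (Fin 2) K} {a b : K}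
    (hsum : a + b = A.trace) (hprod : a * b = A.det) (hab : a ≠ b) :
    ∃ u ≠ 0, A *ᵥ u = a • u := by
  have hA : A - b • 1 ≠ 0 := by
    intro h
    rw [sub_eq_zero] at h
    apply hab
    rw [h] at hsum
    simp only [trace_smul, trace_one, Fintype.card_fin, Nat.cast_ofNat, smul_eq_mul] at hsum
    linear_combination hsum
  obtain ⟨w, hw⟩ := exists_mulVec_ne_zero hA
  refine ⟨_, hw, ?_⟩
  have h := congr_arg (· *ᵥ w) (sub_smul_one_mul_sub_smul_one hsum hprod)
  simpa [← mulVec_mulVec, sub_mulVec, sub_eq_zero] using h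

theorem exists_linearIndependent_eigenvectors {A : Matrix (Fin 2) (Fin 2) K} {a b : K}
    (hsum : a + b = A.trace) (hprod : a * b = A.det) (hab : a ≠ b) :
    ∃ u w, LinearIndependent K ![u, w] ∧ A *ᵥ u = a • u ∧ A *ᵥ w = b • w := by
  obtain ⟨u, hu0, hu⟩ := exists_ne_zero_mulVec_eq_smul hsum hprod hab
  obtain ⟨w, hw0, hw⟩ :=
    exists_ne_zero_mulVec_eq_smul (by rwa [add_comm]) (by rwa [mul_comm]) hab.symm
  refine ⟨u, w, linearIndependent_pair_of_mulVec (N := A - a • 1) hu0 ?_ ?_, hu, hw⟩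
  · rw [sub_mulVec, hu, smul_mulVec, one_mulVec, sub_self]
  · rw [sub_mulVec, hw, smul_mulVec, one_mulVec, ← sub_smul]
    exact smul_ne_zero (sub_ne_zero.2 hab.symm) hw0

end Field

end Matrix

section Forms

variable {P : MvPolynomial (Fin 2) ℝ} {m : ℕ} {A : Matrix (Fin 2) (Fin 2) ℝ}

theorem isScaledQuadraticPower_of_invariant_of_two_lt_trace (hP : P.IsHomogeneous (2 * m))
    (hdet : A.det = 1) (htr : 2 < A.trace) (hinv : ∀ v, eval (A *ᵥ v) P = eval v P) :
    IsScaledQuadraticPower P m := by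
  set s := √(A.trace ^ 2 - 4)
  have hs : 0 < s := Real.sqrt_pos.2 (by nlinarith)
  have hs2 : s ^ 2 = A.trace ^ 2 - 4 := Real.sq_sqrt (by nlinarith)
  set a := (A.trace + s) / 2 with ha
  set b := (A.trace - s) / 2 with hb
  have hab : a * b = 1 := by linear_combination -hs2 / 4
  obtain ⟨u, w, hind, hu, hw⟩ := exists_linearIndependent_eigenvectors (A := A) (a := a) (b := b)
    (by ring) (by rw [hab, hdet]) (by linarith)
  have hdiag : ∀ x y, eval ![a * x, b * y] (linearSubst (of ![u, w])ᵀ P)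
      = eval ![x, y] (linearSubst (of ![u, w])ᵀ P) := fun x y => by
    rw [eval_linearSubst, eval_linearSubst, ← hinv ((of ![u, w])ᵀ *ᵥ ![x, y])]
    simp only [transpose_of_pair_mulVec, mulVec_add, mulVec_smul, hu, hw, smul_smul,
      Matrix.cons_val_zero, Matrix.cons_val_one, mul_comm]
  obtain ⟨c, hc⟩ := eq_C_mul_X_mul_X_pow_of_diagonal_invariant (hP.linearSubst _)
    (pow_right_injective₀ (by linarith) (by linarith)) hab hdiag
  exact .of_linearSubst (isUnit_det_transpose_of_pair hind)
    (hc ▸ isScaledQuadraticPower_C_mul_pow ((isHomogeneous_X _ 0).mul (isHomogeneous_X _ 1)) c m)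

theorem isScaledQuadraticPower_of_invariant_of_trace_eq_two (hP : P.IsHomogeneous (2 * m))
    (hdet : A.det = 1) (htr : A.trace = 2) (hA : A ≠ 1) (hinv : ∀ v, eval (A *ᵥ v) P = eval v P) :
    IsScaledQuadraticPower P m := by
  have hN : (A - 1) * (A - 1) = 0 := by
    simpa using sub_smul_one_mul_sub_smul_one (A := A) (a := 1) (b := 1)
      (by rw [htr]; norm_num) (by rw [hdet]; norm_num)
  obtain ⟨w, hNw⟩ := exists_mulVec_ne_zero (sub_ne_zero.2 hA)
  have hw : A *ᵥ w = (A - 1) *ᵥ w + w := by rw [sub_mulVec, one_mulVec, sub_add_cancel]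
  set u := (A - 1) *ᵥ w
  have hNu : (A - 1) *ᵥ u = 0 := by rw [mulVec_mulVec, hN, zero_mulVec]
  have hu : A *ᵥ u = u := by rwa [sub_mulVec, one_mulVec, sub_eq_zero] at hNu
  have hshear : ∀ x y, eval ![x + y, y] (linearSubst (of ![u, w])ᵀ P)
      = eval ![x, y] (linearSubst (of ![u, w])ᵀ P) := fun x y => by
    rw [eval_linearSubst, eval_linearSubst, ← hinv ((of ![u, w])ᵀ *ᵥ ![x, y])]
    simp only [transpose_of_pair_mulVec, mulVec_add, mulVec_smul, hu, hw,
      Matrix.cons_val_zero, Matrix.cons_val_one]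
    congr 2
    module
  obtain ⟨c, hc⟩ := eq_C_mul_X_sq_pow_of_shear_invariant (hP.linearSubst _) hshear
  have hind := linearIndependent_pair_of_mulVec hNw hNu hNw
  exact .of_linearSubst (isUnit_det_transpose_of_pair hind)
    (hc ▸ isScaledQuadraticPower_C_mul_pow (isHomogeneous_X_pow _ 2) c m)

end Forms

section Cone

variable {E : Type*} [AddCommGroup E] [Module ℝ E] {C : Set E}

theorem Convex.add_mem_of_smul_mem (hconv : Convex ℝ C)
    (hcone : ∀ v ∈ C, ∀ t : ℝ, 0 ≤ t → t • v ∈ C) {x y : E} (hx : x ∈ C) (hy : y ∈ C) :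
    x + y ∈ C := by
  have h := hcone _ (hconv hx hy (by norm_num : (0 : ℝ) ≤ 1 / 2) (by norm_num : (0 : ℝ) ≤ 1 / 2)
    (by norm_num)) 2 (by norm_num)
  rwa [smul_add, smul_smul, smul_smul, show (2 : ℝ) * (1 / 2) = 1 by norm_num, one_smul,
    one_smul] at h

theorem subset_zero_of_mapsTo_of_elliptic {C : Set (Fin 2 → ℝ)} (hconv : Convex ℝ C)
    (hcone : ∀ v ∈ C, ∀ t : ℝ, 0 ≤ t → t • v ∈ C) (hstrict : ∀ v, v ∈ C → -v ∈ C → v = 0)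
    {A : Matrix (Fin 2) (Fin 2) ℝ} (hmaps : Set.MapsTo (A *ᵥ ·) C C) (hdet : A.det = 1)
    (htr : A.trace = -1 ∨ A.trace = 0 ∨ A.trace = 1) : C ⊆ {0} := by
  intro v hv
  have hCH := Matrix.mul_self_eq_trace_smul_sub_det_smul A
  rw [hdet, one_smul] at hCH
  rcases htr with htr | htr | htr <;> rw [htr] at hCH
  · have hsum : v + A *ᵥ v ∈ C := hconv.add_mem_of_smul_mem hcone hv (hmaps hv)
    have hA2 : A *ᵥ (A *ᵥ v) = -(v + A *ᵥ v) := by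
      rw [mulVec_mulVec, hCH, sub_mulVec, neg_smul, one_smul, neg_mulVec, one_mulVec]
      abel
    have h0 := hstrict _ hsum (hA2 ▸ hmaps (hmaps hv))
    rw [add_eq_zero_iff_neg_eq] at h0
    exact hstrict v hv (h0 ▸ hmaps hv)
  · have hA2 : A *ᵥ (A *ᵥ v) = -v := by
      rw [mulVec_mulVec, hCH, zero_smul, zero_sub, neg_mulVec, one_mulVec]
    exact hstrict v hv (hA2 ▸ hmaps (hmaps hv))
  · have hA3 : A *ᵥ (A *ᵥ (A *ᵥ v)) = -v := by
      have h3 : A * A * A = -1 := by rw [hCH, one_smul, sub_mul, one_mul, hCH, one_smul]; abel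
      rw [mulVec_mulVec, mulVec_mulVec, h3, neg_mulVec, one_mulVec]
    exact hstrict v hv (hA3 ▸ hmaps (hmaps (hmaps hv)))

end Cone

theorem sq_eq_one_of_even_invariant_form_general (m : ℕ)
    (C : Set (Fin 2 → ℝ))
    (hconv : Convex ℝ C)
    (hcone : ∀ v ∈ C, ∀ t : ℝ, 0 ≤ t → t • v ∈ C)
    (hstrict : ∀ v : Fin 2 → ℝ, v ∈ C → -v ∈ C → v = 0)
    (hint : (interior C).Nonempty)
    (g : Matrix (Fin 2) (Fin 2) ℤ) (hg : g.det = 1 ∨ g.det = -1)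
    (hpres : (fun v : Fin 2 → ℝ => (g.map (Int.cast : ℤ → ℝ)).mulVec v) '' C = C)
    (P : MvPolynomial (Fin 2) ℝ) (hP : P.IsHomogeneous (2 * m))
    (hinv : ∀ v : Fin 2 → ℝ,
      MvPolynomial.eval ((g.map (Int.cast : ℤ → ℝ)).mulVec v) P = MvPolynomial.eval v P)
    (hnq : ¬ ∃ (c : ℝ) (q : MvPolynomial (Fin 2) ℝ), q.IsHomogeneous 2 ∧
      ∀ v : Fin 2 → ℝ, MvPolynomial.eval v P = c * (MvPolynomial.eval v q) ^ m) :
    g ^ 2 = 1 := by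
  set A : Matrix (Fin 2) (Fin 2) ℝ := g.map (Int.cast : ℤ → ℝ)
  have hdet : A.det = g.det := by simp [A, det_fin_two]
  have htr : A.trace = g.trace := by simp [A, trace_fin_two]
  have hdet2 : (A * A).det = 1 := by rw [det_mul, hdet]; rcases hg with h | h <;> simp [h]
  have hinv2 : ∀ v, eval ((A * A) *ᵥ v) P = eval v P := fun v => by rw [← mulVec_mulVec, hinv, hinv]
  by_contra hg2
  have hmap : (g ^ 2).map (Int.cast : ℤ → ℝ) = A * A := by ext i j; simp [A, sq, mul_apply]
  have hA2 : A * A ≠ 1 := fun h => hg2 <| map_injective Int.cast_injective <|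
    hmap.trans (h.trans (Matrix.map_one _ Int.cast_zero Int.cast_one).symm)
  rcases lt_trichotomy (A * A).trace 2 with hlt | heq | hgt
  · rw [trace_mul_self, hdet, htr] at hlt
    have hlt' : g.trace ^ 2 - 2 * g.det < 2 := by exact_mod_cast hlt
    have hd : g.det = 1 := hg.resolve_right fun h => by nlinarith
    have ht : g.trace = -1 ∨ g.trace = 0 ∨ g.trace = 1 := by
      have : -2 < g.trace := by nlinarith
      have : g.trace < 2 := by nlinarith
      omega
    have hC := subset_zero_of_mapsTo_of_elliptic hconv hcone hstrict
      (hpres ▸ Set.mapsTo_image _ C) (by rw [hdet, hd, Int.cast_one])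
      (by rw [htr]; rcases ht with h | h | h <;> simp [h])
    refine hint.ne_empty (Set.subset_empty_iff.mp ?_)
    exact interior_singleton (0 : Fin 2 → ℝ) ▸ interior_mono hC
  · exact hnq (isScaledQuadraticPower_of_invariant_of_trace_eq_two hP hdet2 heq hA2 hinv2)
  · exact hnq (isScaledQuadraticPower_of_invariant_of_two_lt_trace hP hdet2 hgt hinv2)

/-- Let `n = 2m` be even and positive, `C ⊆ ℝ²` a strict closed convex cone with nonempty
interior preserved by `g ∈ GL(2,ℤ)`, and `P` a homogeneous polynomial of degree `n`
invariant under `g`, not vanishing at some interior point of `C`, and not of the form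
`c·qᵐ` for a real number `c` and a homogeneous quadratic polynomial `q`. Then `g² = 1`. -/
theorem sq_eq_one_of_even_invariant_form (m : ℕ) (hm : 0 < m)
    (C : Set (Fin 2 → ℝ))
    (hclosed : IsClosed C) (hconv : Convex ℝ C)
    (hcone : ∀ v ∈ C, ∀ t : ℝ, 0 ≤ t → t • v ∈ C)
    (hstrict : ∀ v : Fin 2 → ℝ, v ∈ C → -v ∈ C → v = 0)
    (hint : (interior C).Nonempty)
    (g : Matrix (Fin 2) (Fin 2) ℤ) (hg : g.det = 1 ∨ g.det = -1)
    (hpres : (fun v : Fin 2 → ℝ => (g.map (Int.cast : ℤ → ℝ)).mulVec v) '' C = C)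
    (P : MvPolynomial (Fin 2) ℝ) (hP : P.IsHomogeneous (2 * m))
    (hinv : ∀ v : Fin 2 → ℝ,
      MvPolynomial.eval ((g.map (Int.cast : ℤ → ℝ)).mulVec v) P = MvPolynomial.eval v P)
    (hne : ∃ v₀ ∈ interior C, MvPolynomial.eval v₀ P ≠ 0)
    (hnq : ¬ ∃ (c : ℝ) (q : MvPolynomial (Fin 2) ℝ), q.IsHomogeneous 2 ∧
      ∀ v : Fin 2 → ℝ, MvPolynomial.eval v P = c * (MvPolynomial.eval v q) ^ m) :
    g ^ 2 = 1 :=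
  sq_eq_one_of_even_invariant_form_general m C hconv hcone hstrict hint g hg hpres P hP hinv hnq
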